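/- Let Z be a chi-squared random variable with k degrees of freedom. Then for every x ≥ 0, P(|Z − k| > 2√(kx) + 2x) ≤ 2e^{−x}. -/

import Mathlib

open MeasureTheory ProbabilityTheory

/-- The chi-squared distribution with `k` degrees of freedom, as the Gamma
distribution with shape `k/2` and rate `1/2`. -/
noncomputable def chiSquared (k : ℕ) : Measure ℝ :=
  gammaMeasure ((k : ℝ) / 2) (1 / 2)

/-!
Chernoff's method. Exponential tilting, `e^{tz} γ_{a,r}(z) = (r/(r-t))^a γ_{a,r-t}(z)`, gives the
moment generating function of the Gamma law, and the optimised Chernoff bound reads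
`P(Z ≥ s·a/r) ≤ (s e^{1-s})^a` for `s ≥ 1` and `P(Z ≤ s·a/r) ≤ (s e^{1-s})^a` for `0 < s ≤ 1`.
For `χ²_k` (`a = k/2`, `r = 1/2`, mean `k`) write `x = k w²`. The deviations `2√(kx) + 2x` above
and `2√(kx)` below the mean correspond to `s = 1 + 2w + 2w²` and `s = 1 - 2w`, and in both cases
`s e^{1-s} ≤ e^{-2w²}`, by `e^{2w} ≥ 1 + 2w + 2w²` and `-log(1 - y) ≥ y + y²/2` respectively.
Hence each tail is at most `e^{-k w²} = e^{-x}`.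
-/

open Real

namespace ProbabilityTheory

lemma measurable_gammaPDF (a r : ℝ) : Measurable (gammaPDF a r) :=
  (measurable_gammaPDFReal a r).ennreal_ofReal

lemma gammaPDF_mul_exp_mul {a r t : ℝ} (hr : 0 ≤ r) (ht : t < r) (z : ℝ) :
    gammaPDF a r z * ENNReal.ofReal (exp (t * z)) =
      ENNReal.ofReal ((r / (r - t)) ^ a) * gammaPDF a (r - t) z := by
  rcases lt_or_ge z 0 with hz | hz
  · simp [gammaPDF_of_neg hz]
  have hrt : 0 < r - t := sub_pos.2 ht
  have hexp : exp (-(r * z)) * exp (t * z) = exp (-((r - t) * z)) := by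
    rw [← exp_add]; ring_nf
  rw [gammaPDF_of_nonneg hz, gammaPDF_of_nonneg hz, ← ENNReal.ofReal_mul' (exp_pos _).le,
    ← ENNReal.ofReal_mul (by positivity), mul_assoc _ (exp _), hexp, div_rpow hr hrt.le]
  field_simp

lemma lintegral_exp_mul_gammaMeasure {a r t : ℝ} (ha : 0 < a) (hr : 0 ≤ r) (ht : t < r) :
    ∫⁻ z, ENNReal.ofReal (exp (t * z)) ∂gammaMeasure a r =
      ENNReal.ofReal ((r / (r - t)) ^ a) := by
  rw [gammaMeasure, lintegral_withDensity_eq_lintegral_mul _ (measurable_gammaPDF a r)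
    (by fun_prop)]
  simp_rw [Pi.mul_apply, gammaPDF_mul_exp_mul hr ht]
  rw [lintegral_const_mul _ (measurable_gammaPDF a _),
    lintegral_gammaPDF_eq_one ha (sub_pos.2 ht), mul_one]

lemma integrable_exp_mul_gammaMeasure {a r t : ℝ} (ha : 0 < a) (hr : 0 ≤ r) (ht : t < r) :
    Integrable (fun z ↦ exp (t * z)) (gammaMeasure a r) := by
  refine ⟨by fun_prop, ?_⟩
  rw [hasFiniteIntegral_iff_ofReal (ae_of_all _ fun z ↦ (exp_pos _).le),
    lintegral_exp_mul_gammaMeasure ha hr ht]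
  exact ENNReal.ofReal_lt_top

lemma mgf_gammaMeasure {a r t : ℝ} (ha : 0 < a) (hr : 0 ≤ r) (ht : t < r) :
    mgf id (gammaMeasure a r) t = (r / (r - t)) ^ a := by
  rw [mgf, integral_eq_lintegral_of_nonneg_ae (ae_of_all _ fun z ↦ (exp_pos _).le)
    (by fun_prop)]
  simp only [id, lintegral_exp_mul_gammaMeasure ha hr ht]
  exact ENNReal.toReal_ofReal (rpow_nonneg (div_nonneg hr (sub_pos.2 ht).le) _)

/-- `t = r - r / s` is the parameter minimising the Chernoff bound at the level `s * (a / r)`. -/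
lemma exp_mul_mgf_gammaMeasure_eq {a r s : ℝ} (ha : 0 < a) (hr : 0 < r) (hs : 0 < s) :
    exp (-(r - r / s) * (s * (a / r))) * mgf id (gammaMeasure a r) (r - r / s) =
      (s * exp (1 - s)) ^ a := by
  rw [mgf_gammaMeasure ha hr.le (sub_lt_self r (div_pos hr hs)), sub_sub_cancel,
    div_div_cancel₀ hr.ne', mul_rpow hs.le (exp_pos _).le, ← exp_mul, mul_comm (s ^ a)]
  congr 2
  field_simp
  ring

lemma gammaMeasure_real_ge_le {a r s : ℝ} (ha : 0 < a) (hr : 0 < r) (hs : 1 ≤ s) :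
    (gammaMeasure a r).real {z | s * (a / r) ≤ z} ≤ (s * exp (1 - s)) ^ a := by
  have := isProbabilityMeasure_gammaMeasure ha hr
  have hs₀ : 0 < s := by linarith
  rw [← exp_mul_mgf_gammaMeasure_eq ha hr hs₀]
  refine measure_ge_le_exp_mul_mgf _ ?_ (integrable_exp_mul_gammaMeasure ha hr.le ?_)
  · rw [sub_nonneg]; exact div_le_self hr.le hs
  · exact sub_lt_self r (div_pos hr hs₀)

lemma gammaMeasure_real_le_le {a r s : ℝ} (ha : 0 < a) (hr : 0 < r) (hs₀ : 0 < s)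
    (hs : s ≤ 1) :
    (gammaMeasure a r).real {z | z ≤ s * (a / r)} ≤ (s * exp (1 - s)) ^ a := by
  have := isProbabilityMeasure_gammaMeasure ha hr
  rw [← exp_mul_mgf_gammaMeasure_eq ha hr hs₀]
  refine measure_le_le_exp_mul_mgf _ ?_ (integrable_exp_mul_gammaMeasure ha hr.le ?_)
  · rw [sub_nonpos]; exact le_div_self hr.le hs₀ hs
  · exact sub_lt_self r (div_pos hr hs₀)

/-- The density vanishes identically since `Γ(0) = 0` and `0⁻¹ = 0`. -/
lemma gammaMeasure_zero_left (r : ℝ) : gammaMeasure 0 r = 0 := by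
  have : gammaPDF 0 r = 0 := by
    ext z; simp [gammaPDF_eq]
  rw [gammaMeasure, this, withDensity_zero]

lemma gammaMeasure_Iic_zero (a r : ℝ) : gammaMeasure a r (Set.Iic 0) = 0 := by
  rw [gammaMeasure, withDensity_apply _ measurableSet_Iic, ← setLIntegral_congr Iio_ae_eq_Iic,
    lintegral_gammaPDF_of_nonpos le_rfl]

end ProbabilityTheory

lemma Real.one_sub_le_exp_neg_sub_sq_div_two {y : ℝ} (hy : 0 ≤ y) :
    1 - y ≤ exp (-y - y ^ 2 / 2) := by
  rcases le_or_gt 1 y with h1 | h1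
  · exact (sub_nonpos.2 h1).trans (exp_pos _).le
  have hlog : y + y ^ 2 / 2 ≤ -log (1 - y) := by
    have := sum_le_hasSum (Finset.range 2) (fun n _ ↦ by positivity)
      (hasSum_pow_div_log_of_abs_lt_one (abs_lt.2 ⟨by linarith, h1⟩))
    norm_num [Finset.sum_range_succ] at this
    linarith
  calc 1 - y = exp (log (1 - y)) := (exp_log (by linarith)).symm
    _ ≤ exp (-y - y ^ 2 / 2) := exp_le_exp.2 (by linarith)

lemma rpow_half_le_exp_neg_mul_sq {q w c : ℝ} (hq : 0 ≤ q) (hqw : q ≤ exp (-(2 * w ^ 2)))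
    (hc : 0 ≤ c) : q ^ (c / 2) ≤ exp (-(c * w ^ 2)) := by
  calc q ^ (c / 2) ≤ exp (-(2 * w ^ 2)) ^ (c / 2) := by gcongr
    _ = exp (-(c * w ^ 2)) := by rw [← exp_mul]; ring_nf

lemma isProbabilityMeasure_chiSquared {k : ℕ} (hk : 0 < k) :
    IsProbabilityMeasure (chiSquared k) :=
  isProbabilityMeasure_gammaMeasure (by positivity) (by norm_num)

lemma chiSquared_zero : chiSquared 0 = 0 := by
  simp [chiSquared, gammaMeasure_zero_left]

lemma chiSquared_real_upper_tail {k : ℕ} (hk : 0 < k) {w : ℝ} (hw : 0 ≤ w) :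
    (chiSquared k).real {z | (1 + 2 * w + 2 * w ^ 2) * k ≤ z} ≤ exp (-(k * w ^ 2)) := by
  have hrate : (1 + 2 * w + 2 * w ^ 2) * exp (1 - (1 + 2 * w + 2 * w ^ 2)) ≤
      exp (-(2 * w ^ 2)) := by
    have hquad : 1 + 2 * w + 2 * w ^ 2 ≤ exp (2 * w) := by
      have := quadratic_le_exp_of_nonneg (by positivity : 0 ≤ 2 * w)
      linarith
    calc (1 + 2 * w + 2 * w ^ 2) * exp (1 - (1 + 2 * w + 2 * w ^ 2))
        ≤ exp (2 * w) * exp (1 - (1 + 2 * w + 2 * w ^ 2)) := by gcongr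
      _ = exp (-(2 * w ^ 2)) := by rw [← exp_add]; ring_nf
  have htail := gammaMeasure_real_ge_le (r := 1 / 2) (s := 1 + 2 * w + 2 * w ^ 2)
    (by positivity : 0 < (k : ℝ) / 2) (by norm_num) (by nlinarith)
  rw [show (k : ℝ) / 2 / (1 / 2) = k by ring] at htail
  exact htail.trans (rpow_half_le_exp_neg_mul_sq (by positivity) hrate k.cast_nonneg)

lemma chiSquared_real_lower_tail {k : ℕ} (hk : 0 < k) {w : ℝ} (hw : 0 ≤ w) :
    (chiSquared k).real {z | z ≤ (1 - 2 * w) * k} ≤ exp (-(k * w ^ 2)) := by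
  rcases le_or_gt 1 (2 * w) with hw₁ | hw₁
  · have hsub : {z : ℝ | z ≤ (1 - 2 * w) * k} ⊆ Set.Iic 0 := fun z (hz : z ≤ _) ↦
      hz.trans (mul_nonpos_of_nonpos_of_nonneg (by linarith) k.cast_nonneg)
    rw [measureReal_def, chiSquared, measure_mono_null hsub (gammaMeasure_Iic_zero _ _)]
    positivity
  have hrate : (1 - 2 * w) * exp (1 - (1 - 2 * w)) ≤ exp (-(2 * w ^ 2)) := by
    calc (1 - 2 * w) * exp (1 - (1 - 2 * w))
        ≤ exp (-(2 * w) - (2 * w) ^ 2 / 2) * exp (2 * w) := by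
          rw [sub_sub_cancel]
          gcongr
          exact one_sub_le_exp_neg_sub_sq_div_two (by positivity)
      _ = exp (-(2 * w ^ 2)) := by rw [← exp_add]; ring_nf
  have htail := gammaMeasure_real_le_le (r := 1 / 2) (s := 1 - 2 * w)
    (by positivity : 0 < (k : ℝ) / 2) (by norm_num) (by linarith) (by linarith)
  rw [show (k : ℝ) / 2 / (1 / 2) = k by ring] at htail
  exact htail.trans
    (rpow_half_le_exp_neg_mul_sq (mul_nonneg (by linarith) (exp_pos _).le) hrate k.cast_nonneg)

/-- Laurent–Massart two-sided concentration for the chi-squared distribution. -/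
theorem chiSquared_laurent_massart (k : ℕ) (x : ℝ) (hx : 0 ≤ x) :
    ((chiSquared k) {z : ℝ | 2 * Real.sqrt (k * x) + 2 * x < |z - k|}).toReal
      ≤ 2 * Real.exp (-x) := by
  rcases k.eq_zero_or_pos with rfl | hk
  · simp only [chiSquared_zero, Measure.coe_zero, Pi.zero_apply, ENNReal.toReal_zero]
    positivity
  have := isProbabilityMeasure_chiSquared hk
  have hk₀ : (0 : ℝ) < k := by exact_mod_cast hk
  set w := √(k * x) / k
  have hw : 0 ≤ w := by positivity
  have hkw : k * w = √(k * x) := by simp only [w]; field_simp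
  have hkw2 : k * w ^ 2 = x := by
    rw [div_pow, sq_sqrt (by positivity)]; field_simp
  clear_value w
  have hsub : {z : ℝ | 2 * √(k * x) + 2 * x < |z - k|} ⊆
      {z | (1 + 2 * w + 2 * w ^ 2) * k ≤ z} ∪ {z | z ≤ (1 - 2 * w) * k} := by
    intro z (hz : _ < |z - k|)
    rcases lt_abs.1 hz with h | h
    · left; show _ ≤ z; linarith
    · right; show z ≤ _; linarith
  calc (chiSquared k).real {z : ℝ | 2 * √(k * x) + 2 * x < |z - k|}
      ≤ (chiSquared k).real {z | (1 + 2 * w + 2 * w ^ 2) * k ≤ z}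
        + (chiSquared k).real {z | z ≤ (1 - 2 * w) * k} :=
        (measureReal_mono hsub).trans (measureReal_union_le _ _)
    _ ≤ exp (-(k * w ^ 2)) + exp (-(k * w ^ 2)) :=
        add_le_add (chiSquared_real_upper_tail hk hw) (chiSquared_real_lower_tail hk hw)
    _ = 2 * exp (-x) := by rw [hkw2]; ring
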